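/- Let p be an odd prime, and let Y be an extraspecial subgroup of exponent p of a finite p-group Q with [Q,Y] = Z(Y) and Q = Ω₁(Q). Then Q = Y · Ω₁(C_Q(Y)), and C_Q(Y) = Ω₁(C_Q(Y)). -/

import Mathlib

/-!
For `x ∈ Q` the hypothesis `[Q,Y] = Z(Y)` makes `z ↦ [x,z]` a homomorphism `Y → Z(Y)`. In an
extraspecial group every such homomorphism is inner, `z ↦ [y,z]` with `y ∈ Y`: the commutator
pairing `Y → Hom(Y, Z(Y))` has kernel `Z(Y)`, while `Hom(Y, Z(Y)) = Hom(Y/Y', Z(Y))` is the dual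
of the `𝔽_p`-space `Y/Y' = Y/Z(Y)` and so has the same order. Hence `y⁻¹x ∈ C_Q(Y)`, i.e.
`Q = Y C_Q(Y)`. If `x^p = 1` then also `(y⁻¹x)^p = 1`, so `Y Ω₁(C_Q(Y))` contains the generators of
`Q`; and if `c = y k ∈ C_Q(Y)` with `k ∈ Ω₁(C_Q(Y))`, then `y ∈ Y ∩ C_Q(Y)` has order `p`.
-/

/-- `G` is extraspecial for the prime `p`: its center has order `p` and `G/Z(G)`
is elementary abelian (nontrivial, abelian of exponent `p`). -/
def IsExtraspecial (p : ℕ) (G : Type*) [Group G] : Prop :=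
  Nat.card (Subgroup.center G) = p ∧
  Nontrivial (G ⧸ Subgroup.center G) ∧
  (∀ a b : G ⧸ Subgroup.center G, a * b = b * a) ∧
  (∀ a : G ⧸ Subgroup.center G, a ^ p = 1)

open Subgroup
open scoped commutatorElement IsMulCommutative

theorem card_monoidHom_of_card_eq_prime {p : ℕ} [Fact p.Prime] {V N : Type*} [CommGroup V]
    [Group N] [Finite V] (hV : ∀ v : V, v ^ p = 1) (hN : Nat.card N = p) :
    Nat.card (V →* N) = Nat.card V := by
  classical
  let _ : Module (ZMod p) (Additive V) := AddCommGroup.zmodModule (n := p) fun v ↦ hV v.toMul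
  let b := Module.Basis.ofVectorSpace (ZMod p) (Additive V)
  have e : N ≃* Multiplicative (ZMod p) := mulEquivOfPrimeCardEq hN (by simp)
  exact Nat.card_congr <| (e.monoidHomCongrRightEquiv.trans MonoidHom.toAdditiveLeft).trans <|
    (AddMonoidHom.toZModLinearMapEquiv p).toEquiv.trans b.toDualEquiv.symm.toEquiv

section Commutator

variable {G : Type*} [Group G]

theorem commutatorElement_mul_right_of_commute {x y z : G} (h : Commute y ⁅x, z⁆) :
    ⁅x, y * z⁆ = ⁅x, y⁆ * ⁅x, z⁆ := by
  rw [commutatorElement_mul_right_eq_mul_conj, mul_assoc _ y, h.eq, ← mul_assoc,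
    mul_inv_cancel_right]

theorem commutatorElement_mul_left_of_commute {x y z : G} (h : Commute x ⁅y, z⁆) :
    ⁅x * y, z⁆ = ⁅y, z⁆ * ⁅x, z⁆ := by
  rw [commutatorElement_mul_left_eq_conj_mul, h.eq, mul_inv_cancel_right]

theorem commute_inv_mul_of_commutatorElement_eq {x y z : G} (h : ⁅x, z⁆ = ⁅y, z⁆) :
    Commute (y⁻¹ * x) z := by
  have hconj : x * z * x⁻¹ = y * z * y⁻¹ := by
    simpa only [commutatorElement_def, mul_left_inj] using h
  calc y⁻¹ * x * z = y⁻¹ * (x * z * x⁻¹) * x := by group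
    _ = z * (y⁻¹ * x) := by rw [hconj]; group

theorem commutatorElement_mem_center (h : commutator G ≤ center G) (x y : G) :
    ⁅x, y⁆ ∈ center G :=
  h (commutator_mem_commutator (mem_top x) (mem_top y))

def commutatorPairing (h : commutator G ≤ center G) : G →* G →* center G :=
  MonoidHom.mk'
    (fun x ↦ MonoidHom.mk' (fun y ↦ ⟨⁅x, y⁆, commutatorElement_mem_center h x y⟩) fun y z ↦
      Subtype.ext <| commutatorElement_mul_right_of_commute <|
        mem_center_iff.mp (commutatorElement_mem_center h x z) y)
    fun x y ↦ MonoidHom.ext fun z ↦ Subtype.ext <| by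
      rw [mul_comm]
      exact commutatorElement_mul_left_of_commute <|
        mem_center_iff.mp (commutatorElement_mem_center h y z) x

@[simp]
theorem commutatorPairing_apply (h : commutator G ≤ center G) (x y : G) :
    (commutatorPairing h x y : G) = ⁅x, y⁆ :=
  rfl

theorem ker_commutatorPairing (h : commutator G ≤ center G) :
    (commutatorPairing h).ker = center G := by
  ext x
  simp only [MonoidHom.mem_ker, MonoidHom.ext_iff, Subtype.ext_iff, commutatorPairing_apply,
    MonoidHom.one_apply, OneMemClass.coe_one, commutatorElement_eq_one_iff_commute,
    mem_center_iff, Commute, SemiconjBy, eq_comm]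

end Commutator

namespace IsExtraspecial

variable {p : ℕ} {G : Type*} [Group G]

theorem commutator_le_center (hG : IsExtraspecial p G) : commutator G ≤ center G := by
  let _ : CommGroup (G ⧸ center G) := { mul_comm := hG.2.2.1 }
  simpa using Abelianization.commutator_subset_ker (QuotientGroup.mk' (center G))

theorem commutator_eq_center (hG : IsExtraspecial p G) (hp : p.Prime) :
    commutator G = center G := by
  have hle := hG.commutator_le_center
  have : Finite (center G) := Nat.finite_of_card_ne_zero (hG.1 ▸ hp.ne_zero)
  refine eq_of_le_of_card_ge hle ?_
  rcases hp.eq_one_or_self_of_dvd _ (hG.1 ▸ card_dvd_of_le hle) with h | h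
  · have hnt := hG.2.1
    rw [(commutator_eq_bot_iff_center_eq_top G).mp (eq_bot_of_card_eq _ h)] at hnt
    exact (not_nontrivial_iff_subsingleton.mpr QuotientGroup.subsingleton_quotient_top hnt).elim
  · rw [h, hG.1]

theorem card_monoidHom_center (hG : IsExtraspecial p G) (hp : p.Prime) [Finite G] :
    Nat.card (G →* center G) = Nat.card (G ⧸ center G) := by
  have : Fact p.Prime := ⟨hp⟩
  have hexp (a : Abelianization G) : a ^ p = 1 := by
    obtain ⟨g, rfl⟩ : ∃ g, Abelianization.of g = a := QuotientGroup.mk_surjective a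
    rw [← map_pow, ← MonoidHom.mem_ker, Abelianization.ker_of, hG.commutator_eq_center hp,
      ← QuotientGroup.eq_one_iff, QuotientGroup.mk_pow]
    exact hG.2.2.2 _
  rw [Nat.card_congr Abelianization.lift, card_monoidHom_of_card_eq_prime hexp hG.1]
  exact Nat.card_congr (QuotientGroup.quotientMulEquivOfEq (hG.commutator_eq_center hp)).toEquiv

theorem exists_commutatorElement_eq (hG : IsExtraspecial p G) (hp : p.Prime) [Finite G]
    (f : G →* center G) :
    ∃ x : G, ∀ y : G, (f y : G) = ⁅x, y⁆ := by
  have : Finite (G →* center G) := Finite.of_injective _ DFunLike.coe_injective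
  have hrange : (commutatorPairing hG.commutator_le_center).range = ⊤ := by
    refine eq_top_of_card_eq _ ?_
    rw [← Nat.card_congr (QuotientGroup.quotientKerEquivRange _).toEquiv, ker_commutatorPairing,
      hG.card_monoidHom_center hp]
  obtain ⟨x, hx⟩ := hrange ▸ mem_top f
  exact ⟨x, fun y ↦ by rw [← hx]; rfl⟩

theorem exists_mem_inv_mul_mem_centralizer {Q : Type*} [Group Q] [Finite Q] {Y : Subgroup Q}
    (hY : IsExtraspecial p Y) (hp : p.Prime)
    (hQY : ⁅(⊤ : Subgroup Q), Y⁆ ≤ Y ⊓ centralizer (Y : Set Q)) (x : Q) :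
    ∃ y ∈ Y, y⁻¹ * x ∈ centralizer (Y : Set Q) := by
  have hmem {z : Q} (hz : z ∈ Y) : ⁅x, z⁆ ∈ Y ⊓ centralizer (Y : Set Q) :=
    hQY (commutator_mem_commutator (mem_top x) hz)
  let f : Y →* center Y := MonoidHom.mk'
    (fun z ↦ ⟨⟨⁅x, z⁆, (hmem z.2).1⟩,
      mem_center_iff.mpr fun w ↦ Subtype.ext <| mem_centralizer_iff.mp (hmem z.2).2 w w.2⟩)
    fun z w ↦ Subtype.ext <| Subtype.ext <| commutatorElement_mul_right_of_commute <|
      mem_centralizer_iff.mp (hmem w.2).2 z z.2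
  obtain ⟨y, hy⟩ := hY.exists_commutatorElement_eq hp f
  refine ⟨y, y.2, mem_centralizer_iff.mpr fun z hz ↦ ?_⟩
  exact (commute_inv_mul_of_commutatorElement_eq (congrArg Subtype.val (hy ⟨z, hz⟩))).eq.symm

end IsExtraspecial

theorem stmt_14_general {p : ℕ} (hp : p.Prime)
    {Q : Type*} [Group Q] [Finite Q]
    (hgen : Subgroup.closure {x : Q | x ^ p = 1} = ⊤)
    (Y : Subgroup Q) (hY : IsExtraspecial p Y)
    (hYexp : ∀ y ∈ Y, y ^ p = 1)
    (hcomm : ⁅(⊤ : Subgroup Q), Y⁆ = Y ⊓ Subgroup.centralizer (Y : Set Q)) :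
    (∀ g : Q, ∃ y ∈ Y,
        ∃ c ∈ Subgroup.closure
            {x : Q | x ∈ Subgroup.centralizer (Y : Set Q) ∧ x ^ p = 1},
          g = y * c) ∧
      Subgroup.centralizer (Y : Set Q) =
        Subgroup.closure
          {x : Q | x ∈ Subgroup.centralizer (Y : Set Q) ∧ x ^ p = 1} := by
  set C := centralizer (Y : Set Q)
  set K := closure {x | x ∈ C ∧ x ^ p = 1}
  have hKC : K ≤ C := (closure_le _).mpr fun x hx ↦ hx.1
  have : Y.Normal := commutator_top_left_le_iff.mp (hcomm.le.trans inf_le_left)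
  have hsup : Y ⊔ K = ⊤ := by
    rw [eq_top_iff, ← hgen, closure_le]
    intro x hx
    obtain ⟨y, hy, hc⟩ := hY.exists_mem_inv_mul_mem_centralizer hp hcomm.le x
    have hcp : (y⁻¹ * x) ^ p = 1 := by
      have hyc : Commute y (y⁻¹ * x) := mem_centralizer_iff.mp hc y hy
      have := hyc.mul_pow p
      rwa [mul_inv_cancel_left, hx, hYexp y hy, one_mul, eq_comm] at this
    simpa using mul_mem (mem_sup_left hy) (mem_sup_right (subset_closure ⟨hc, hcp⟩) : _ ∈ Y ⊔ K)
  have hmul (g : Q) : ∃ y ∈ Y, ∃ c ∈ K, y * c = g := by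
    have hg : g ∈ Y ⊔ K := hsup ▸ mem_top g
    rwa [← SetLike.mem_coe, normal_mul] at hg
  refine ⟨fun g ↦ ?_, le_antisymm (fun c hc ↦ ?_) hKC⟩
  · obtain ⟨y, hy, c, hc, rfl⟩ := hmul g
    exact ⟨y, hy, c, hc, rfl⟩
  · obtain ⟨y, hy, k, hk, rfl⟩ := hmul c
    have hyC : y ∈ C := by simpa using C.mul_mem hc (C.inv_mem (hKC hk))
    exact K.mul_mem (subset_closure ⟨hyC, hYexp y hy⟩) hk

/-- Let `p` be an odd prime, `Q` a finite `p`-group with `Q = Ω₁(Q)`, and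
`Y ≤ Q` extraspecial of exponent `p` with `[Q,Y] = Z(Y)`. Then
`Q = Y · Ω₁(C_Q(Y))` and `C_Q(Y) = Ω₁(C_Q(Y))`. -/
theorem stmt_14 {p : ℕ} (hp : p.Prime) (hodd : Odd p)
    {Q : Type*} [Group Q] [Finite Q] (hQ : IsPGroup p Q)
    (hgen : Subgroup.closure {x : Q | x ^ p = 1} = ⊤)
    (Y : Subgroup Q) (hY : IsExtraspecial p Y)
    (hYexp : ∀ y ∈ Y, y ^ p = 1)
    (hcomm : ⁅(⊤ : Subgroup Q), Y⁆ = Y ⊓ Subgroup.centralizer (Y : Set Q)) :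
    (∀ g : Q, ∃ y ∈ Y,
        ∃ c ∈ Subgroup.closure
            {x : Q | x ∈ Subgroup.centralizer (Y : Set Q) ∧ x ^ p = 1},
          g = y * c) ∧
      Subgroup.centralizer (Y : Set Q) =
        Subgroup.closure
          {x : Q | x ∈ Subgroup.centralizer (Y : Set Q) ∧ x ^ p = 1} :=
  stmt_14_general hp hgen Y hY hYexp hcomm
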